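/- arXiv:2201.11989 — 3 statements merged into one kernel-verified Lean document; each statement's English description precedes it below -/
import Mathlib

section
/- Let A, B > 0, C ≥ 0 and ε > 0 satisfy ε² > C, and define the SFO complexity S(b) := A·b² / ((ε² − C)·b − B) for real b. Then S is convex on the open interval (B/(ε² − C), +∞), the point b⋆ := 2B/(ε² − C) lies in this interval, and b⋆ is a global minimizer of S on this interval, i.e., S(b⋆) ≤ S(b) for all b > B/(ε² − C). -/
/-!
With `k = ε² − C` and the substitution `u = k b − B > 0`, the complexity becomes
`S(b) = A / k² · (u + B)² / u = A / k² · (u + 2B + B² / u)`. The right-hand side is convex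
in `u`, hence in `b`, and `(u + B)² / u − 4B = (u − B)² / u ≥ 0` shows that it is minimal
at `u = B`, that is at `b = 2B / k`.
-/

open Set

lemma convexOn_add_sq_div (B : ℝ) : ConvexOn ℝ (Ioi 0) fun u : ℝ => (u + B) ^ 2 / u := by
  have h : ConvexOn ℝ (Ioi 0) fun u : ℝ => (u + 2 * B) + B ^ 2 • u ^ (-1 : ℤ) :=
    ((convexOn_id (convex_Ioi 0)).add_const _).add ((convexOn_zpow (-1)).smul (sq_nonneg B))
  refine h.congr fun u (hu : 0 < u) => ?_
  simp only [zpow_neg_one, smul_eq_mul]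
  field_simp
  ring

lemma four_mul_le_add_sq_div (B : ℝ) {u : ℝ} (hu : 0 < u) : 4 * B ≤ (u + B) ^ 2 / u := by
  rw [le_div_iff₀ hu]
  nlinarith [sq_nonneg (u - B)]

lemma ConvexOn.comp_mul_sub {f : ℝ → ℝ} (hf : ConvexOn ℝ (Ioi 0) f) {k : ℝ} (hk : 0 < k)
    (B : ℝ) : ConvexOn ℝ (Ioi (B / k)) fun b => f (k * b - B) := by
  let g : ℝ →ᵃ[ℝ] ℝ := k • AffineMap.id ℝ ℝ - AffineMap.const ℝ ℝ B
  have hg : ∀ b, g b = k * b - B := fun b => rfl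
  have hpre : g ⁻¹' Ioi 0 = Ioi (B / k) := by
    ext b
    simp only [mem_preimage, mem_Ioi, hg, sub_pos, div_lt_iff₀ hk, mul_comm]
  simpa only [hpre, Function.comp_def, hg] using hf.comp_affineMap g

theorem critical_batch_size_exists_general (A B C ε : ℝ) (hA : 0 < A) (hB : 0 < B)
    (hεC : C < ε ^ 2) :
    ConvexOn ℝ (Set.Ioi (B / (ε ^ 2 - C)))
      (fun b : ℝ => A * b ^ 2 / ((ε ^ 2 - C) * b - B)) ∧
    2 * B / (ε ^ 2 - C) ∈ Set.Ioi (B / (ε ^ 2 - C)) ∧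
    ∀ b ∈ Set.Ioi (B / (ε ^ 2 - C)),
      A * (2 * B / (ε ^ 2 - C)) ^ 2 / ((ε ^ 2 - C) * (2 * B / (ε ^ 2 - C)) - B)
        ≤ A * b ^ 2 / ((ε ^ 2 - C) * b - B) := by
  set k := ε ^ 2 - C
  have hk : 0 < k := sub_pos.mpr hεC
  have hsubst : ∀ b,
      A * b ^ 2 / (k * b - B) = A / k ^ 2 * ((k * b - B + B) ^ 2 / (k * b - B)) := by
    intro b
    rw [sub_add_cancel, mul_pow, ← mul_div_assoc]
    field_simp
  simp only [hsubst]
  refine ⟨((convexOn_add_sq_div B).comp_mul_sub hk B).smul (by positivity), ?_, fun b hb => ?_⟩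
  · exact div_lt_div_of_pos_right (by linarith) hk
  · have hu : 0 < k * b - B := by
      rw [mem_Ioi, div_lt_iff₀ hk] at hb
      linarith
    have hu_star : k * (2 * B / k) - B = B := by field_simp; ring
    have hmin : (B + B) ^ 2 / B = 4 * B := by field_simp; ring
    rw [hu_star, hmin]
    exact mul_le_mul_of_nonneg_left (four_mul_le_add_sq_div B hu) (by positivity)

/-- **Theorem 3.** Let `A, B > 0`, `C ≥ 0` and `ε > 0` satisfy `ε² > C`, and
define the SFO complexity `S(b) := A·b² / ((ε² − C)·b − B)`. Then `S` is convex on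
`(B/(ε² − C), +∞)`, the critical batch size `b⋆ := 2B/(ε² − C)` lies in this interval, and
`b⋆` is a global minimizer of `S` on this interval. -/
theorem critical_batch_size_exists (A B C ε : ℝ) (hA : 0 < A) (hB : 0 < B) (hC : 0 ≤ C)
    (hε : 0 < ε) (hεC : C < ε ^ 2) :
    ConvexOn ℝ (Set.Ioi (B / (ε ^ 2 - C)))
      (fun b : ℝ => A * b ^ 2 / ((ε ^ 2 - C) * b - B)) ∧
    2 * B / (ε ^ 2 - C) ∈ Set.Ioi (B / (ε ^ 2 - C)) ∧
    ∀ b ∈ Set.Ioi (B / (ε ^ 2 - C)),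
      A * (2 * B / (ε ^ 2 - C)) ^ 2 / ((ε ^ 2 - C) * (2 * B / (ε ^ 2 - C)) - B)
        ≤ A * b ^ 2 / ((ε ^ 2 - C) * b - B) :=
  critical_batch_size_exists_general A B C ε hA hB hεC
end

section
/- Let (Ω, μ) be a probability space, let β ∈ [0, 1), let K ≥ 0, and let (g_n)_{n≥0} and (m_n)_{n≥0} be sequences of measurable maps Ω → ℝ^d such that ‖g_n‖² is integrable for each n, m_0 = (1 − β)·g_0 pointwise, and m_{n+1} = β·m_n + (1 − β)·g_{n+1} pointwise for all n. If ∫_Ω ‖g_n‖² dμ ≤ K for all n, then ∫_Ω ‖m_n‖² dμ ≤ K for all n. -/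
open MeasureTheory

lemma convex_sq_norm_aux {E : Type*} [NormedAddCommGroup E] [NormedSpace ℝ E]
    (β : ℝ) (hβ0 : 0 ≤ β) (hβ1 : β ≤ 1) (x y : E) :
    ‖β • x + (1 - β) • y‖ ^ 2 ≤ β * ‖x‖ ^ 2 + (1 - β) * ‖y‖ ^ 2 := by
  have h1 : ‖β • x + (1 - β) • y‖ ≤ β * ‖x‖ + (1 - β) * ‖y‖ := by
    calc ‖β • x + (1 - β) • y‖ ≤ ‖β • x‖ + ‖(1 - β) • y‖ := norm_add_le _ _
    _ = β * ‖x‖ + (1 - β) * ‖y‖ := by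
        rw [norm_smul, norm_smul, Real.norm_of_nonneg hβ0,
          Real.norm_of_nonneg (by linarith)]
  have h2 : ‖β • x + (1 - β) • y‖ ^ 2 ≤ (β * ‖x‖ + (1 - β) * ‖y‖) ^ 2 :=
    pow_le_pow_left₀ (norm_nonneg _) h1 2
  nlinarith [sq_nonneg (‖x‖ - ‖y‖), norm_nonneg x, norm_nonneg y,
    mul_nonneg hβ0 (sub_nonneg.mpr hβ1)]

/-- **Lemma 2, first part.** Let `(Ω, μ)` be a probability space,
`β ∈ [0,1)`, `K ≥ 0`, and let `(g_n)` and `(m_n)` be sequences of measurable maps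
`Ω → ℝ^d` with `‖g_n‖²` integrable, `m_0 = (1 − β)·g_0` and
`m_{n+1} = β·m_n + (1 − β)·g_{n+1}` pointwise. If `∫ ‖g_n‖² dμ ≤ K` for all `n`, then
`∫ ‖m_n‖² dμ ≤ K` for all `n`. -/
theorem momentum_second_moment_bound {Ω : Type*} [MeasurableSpace Ω]
    (μ : Measure Ω) [IsProbabilityMeasure μ] (d : ℕ)
    (β : ℝ) (hβ0 : 0 ≤ β) (hβ1 : β < 1) (K : ℝ) (hK : 0 ≤ K)
    (g m : ℕ → Ω → EuclideanSpace ℝ (Fin d))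
    (hgmeas : ∀ n, Measurable (g n)) (hmmeas : ∀ n, Measurable (m n))
    (hgint : ∀ n, Integrable (fun ω => ‖g n ω‖ ^ 2) μ)
    (hm0 : ∀ ω, m 0 ω = (1 - β) • g 0 ω)
    (hmrec : ∀ n ω, m (n + 1) ω = β • m n ω + (1 - β) • g (n + 1) ω)
    (hbound : ∀ n, ∫ ω, ‖g n ω‖ ^ 2 ∂μ ≤ K) :
    ∀ n, ∫ ω, ‖m n ω‖ ^ 2 ∂μ ≤ K := by
  have hβ1' : β ≤ 1 := hβ1.le
  have hmmeas2 : ∀ n, AEStronglyMeasurable (fun ω => ‖m n ω‖ ^ 2) μ := fun n =>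
    (((hmmeas n).norm.pow_const 2).aestronglyMeasurable)
  -- strengthened induction: integrable and bounded
  have key : ∀ n, Integrable (fun ω => ‖m n ω‖ ^ 2) μ ∧ ∫ ω, ‖m n ω‖ ^ 2 ∂μ ≤ K := by
    intro n
    induction n with
    | zero =>
      have heq : ∀ ω, ‖m 0 ω‖ ^ 2 = (1 - β) ^ 2 * ‖g 0 ω‖ ^ 2 := by
        intro ω
        rw [hm0 ω, norm_smul, Real.norm_of_nonneg (by linarith), mul_pow]
      constructor
      · have := (hgint 0).const_mul ((1 - β) ^ 2)
        exact this.congr (Filter.Eventually.of_forall fun ω => (heq ω).symm)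
      · calc ∫ ω, ‖m 0 ω‖ ^ 2 ∂μ = ∫ ω, (1 - β) ^ 2 * ‖g 0 ω‖ ^ 2 ∂μ := by
              simp_rw [heq]
          _ = (1 - β) ^ 2 * ∫ ω, ‖g 0 ω‖ ^ 2 ∂μ := integral_const_mul _ _
          _ ≤ 1 * K := by
              apply mul_le_mul ?_ (hbound 0) ?_ zero_le_one
              · nlinarith
              · refine integral_nonneg fun ω => by positivity
          _ = K := one_mul K
    | succ n ih =>
      obtain ⟨ihint, ihbd⟩ := ih
      have hdom : Integrable (fun ω => β * ‖m n ω‖ ^ 2 + (1 - β) * ‖g (n+1) ω‖ ^ 2) μ :=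
        (ihint.const_mul β).add ((hgint (n+1)).const_mul (1 - β))
      have hle : ∀ ω, ‖m (n+1) ω‖ ^ 2 ≤ β * ‖m n ω‖ ^ 2 + (1 - β) * ‖g (n+1) ω‖ ^ 2 := by
        intro ω
        rw [hmrec n ω]
        exact convex_sq_norm_aux β hβ0 hβ1' _ _
      have hint : Integrable (fun ω => ‖m (n+1) ω‖ ^ 2) μ := by
        refine hdom.mono' (hmmeas2 (n+1)) (Filter.Eventually.of_forall fun ω => ?_)
        rw [Real.norm_of_nonneg (by positivity)]
        exact hle ω
      refine ⟨hint, ?_⟩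
      calc ∫ ω, ‖m (n+1) ω‖ ^ 2 ∂μ
          ≤ ∫ ω, (β * ‖m n ω‖ ^ 2 + (1 - β) * ‖g (n+1) ω‖ ^ 2) ∂μ :=
            integral_mono hint hdom hle
        _ = β * (∫ ω, ‖m n ω‖ ^ 2 ∂μ) + (1 - β) * ∫ ω, ‖g (n+1) ω‖ ^ 2 ∂μ := by
            rw [integral_add (ihint.const_mul β) ((hgint (n+1)).const_mul (1 - β)),
              integral_const_mul, integral_const_mul]
        _ ≤ β * K + (1 - β) * K := by
            refine add_le_add (mul_le_mul_of_nonneg_left ihbd hβ0)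
              (mul_le_mul_of_nonneg_left (hbound (n+1)) (by linarith))
        _ = K := by ring
  exact fun n => (key n).2
end

section
/- Let Θ be a positive integer, N ≥ 1 a natural number, and D ≥ 0. Let δ : ℕ → ℝ be nonnegative and nondecreasing, let h : ℕ → Fin Θ → ℝ satisfy 0 ≤ h n i ≤ h (n+1) i for all n and i, and let x : ℕ → Fin Θ → ℝ satisfy 0 ≤ x n i ≤ D for all n and i. Then Σ_{n=1}^{N} δ n · ( Σ_i (h n i)·(x n i − x (n+1) i) ) ≤ δ N · D · Σ_i h N i. -/
/-- Scalar Abel-type bound, by induction. -/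
lemma telescoping_scalar (D : ℝ)
    (δ : ℕ → ℝ) (hδ0 : ∀ n, 0 ≤ δ n) (hδmono : Monotone δ)
    (h : ℕ → ℝ) (hh0 : ∀ n, 0 ≤ h n) (hhmono : ∀ n, h n ≤ h (n + 1))
    (x : ℕ → ℝ) (hx0 : ∀ n, 0 ≤ x n) (hxD : ∀ n, x n ≤ D) :
    ∀ N, 1 ≤ N →
      ∑ n ∈ Finset.Icc 1 N, δ n * h n * (x n - x (n + 1))
        ≤ δ N * h N * (D - x (N + 1)) := by
  intro N hN
  induction N with
  | zero => omega
  | succ M ih =>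
    rcases Nat.eq_or_lt_of_le hN with h1 | h1
    · have hM : M = 0 := by omega
      subst hM
      simp only [Finset.Icc_self, Finset.sum_singleton]
      norm_num
      nlinarith [mul_nonneg (mul_nonneg (hδ0 1) (hh0 1)) (sub_nonneg.mpr (hxD 1))]
    · have hM : 1 ≤ M := by omega
      rw [Finset.sum_Icc_succ_top (by omega : 1 ≤ M + 1)]
      have hih := ih hM
      have key : δ M * h M * (D - x (M + 1)) ≤ δ (M + 1) * h (M + 1) * (D - x (M + 1)) := by
        have hDx : 0 ≤ D - x (M + 1) := by linarith [hxD (M + 1)]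
        have : δ M * h M ≤ δ (M + 1) * h (M + 1) :=
          mul_le_mul (hδmono (Nat.le_succ M)) (hhmono M) (hh0 M) (hδ0 (M + 1))
        nlinarith
      nlinarith

/-- **telescoping bound in Lemma 4_1.** Let `Θ > 0`, `N ≥ 1`, `D ≥ 0`.
Let `δ : ℕ → ℝ` be nonnegative and nondecreasing, let `h : ℕ → Fin Θ → ℝ` satisfy
`0 ≤ h n i ≤ h (n+1) i`, and let `x : ℕ → Fin Θ → ℝ` satisfy `0 ≤ x n i ≤ D`. Then
`Σ_{n=1}^{N} δ n · (Σ_i (h n i)·(x n i − x (n+1) i)) ≤ δ N · D · Σ_i h N i`. -/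
theorem telescoping_weighted_bound (Θ : ℕ) (hΘ : 0 < Θ) (N : ℕ) (hN : 1 ≤ N)
    (D : ℝ) (hD : 0 ≤ D)
    (δ : ℕ → ℝ) (hδ0 : ∀ n, 0 ≤ δ n) (hδmono : Monotone δ)
    (h : ℕ → Fin Θ → ℝ) (hh0 : ∀ n i, 0 ≤ h n i) (hhmono : ∀ n i, h n i ≤ h (n + 1) i)
    (x : ℕ → Fin Θ → ℝ) (hx0 : ∀ n i, 0 ≤ x n i) (hxD : ∀ n i, x n i ≤ D) :
    ∑ n ∈ Finset.Icc 1 N, δ n * (∑ i, h n i * (x n i - x (n + 1) i))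
      ≤ δ N * D * ∑ i, h N i := by
  have step1 : ∑ n ∈ Finset.Icc 1 N, δ n * (∑ i, h n i * (x n i - x (n + 1) i))
      = ∑ i, ∑ n ∈ Finset.Icc 1 N, δ n * h n i * (x n i - x (n + 1) i) := by
    rw [Finset.sum_comm]
    congr 1; ext n
    rw [Finset.mul_sum]
    congr 1; ext i; ring
  rw [step1]
  have step2 : ∀ i : Fin Θ, ∑ n ∈ Finset.Icc 1 N, δ n * h n i * (x n i - x (n + 1) i)
      ≤ δ N * h N i * D := fun i => by
    calc ∑ n ∈ Finset.Icc 1 N, δ n * h n i * (x n i - x (n + 1) i)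
        ≤ δ N * h N i * (D - x (N + 1) i) :=
          telescoping_scalar D δ hδ0 hδmono (fun n => h n i) (fun n => hh0 n i)
            (fun n => hhmono n i) (fun n => x n i) (fun n => hx0 n i)
            (fun n => hxD n i) N hN
      _ ≤ δ N * h N i * D := by
          nlinarith [mul_nonneg (mul_nonneg (hδ0 N) (hh0 N i)) (hx0 (N + 1) i)]
  calc ∑ i, ∑ n ∈ Finset.Icc 1 N, δ n * h n i * (x n i - x (n + 1) i)
      ≤ ∑ i, δ N * h N i * D := Finset.sum_le_sum fun i _ => step2 i
    _ = δ N * D * ∑ i, h N i := by rw [Finset.mul_sum]; congr 1; ext i; ring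
end
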